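/- Let K ⊆ H be a nonempty compact set that is norm separable, and let ε > 0. Then: (1) for every countable ordinal ξ, if 𝔻_ε^{(ξ)}(K) is nonempty then 𝔻_ε^{(ξ+1)}(K) is a proper subset of 𝔻_ε^{(ξ)}(K); and (2) there exists a countable ordinal ξ such that 𝔻_ε^{(ξ)}(K) = ∅. -/

import Mathlib

noncomputable section

/-- `H = [-1,1]^ℕ`, the product of countably many copies of `[-1,1]`, with the
product topology (and its Borel σ-algebra). -/
abbrev H : Type := ℕ → Set.Icc (-1 : ℝ) 1

/-- The supremum distance `‖f − g‖_∞ = sup_n |f(n) − g(n)|` on `H`. -/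
noncomputable def normDist (f g : H) : ℝ := ⨆ n, |(f n : ℝ) - (g n : ℝ)|

/-- The norm diameter of `S ⊆ H`: `sup {‖f − g‖_∞ : f, g ∈ S}`. -/
noncomputable def normDiam (S : Set H) : ℝ :=
  sSup {d : ℝ | ∃ f ∈ S, ∃ g ∈ S, d = normDist f g}

/-- `S ⊆ H` is norm separable: separable w.r.t. the metric `(f,g) ↦ ‖f − g‖_∞`. -/
def NormSeparable (S : Set H) : Prop :=
  ∃ D : Set H, D.Countable ∧ D ⊆ S ∧ ∀ f ∈ S, ∀ δ : ℝ, 0 < δ → ∃ g ∈ D, normDist f g < δ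

/-- The Szlenk-type derivative `𝔻_ε(K)`: points of `K` all of whose open neighbourhoods `U`
have `K ∩ U` of norm diameter greater than `ε`. -/
def Dstar (ε : ℝ) (K : Set H) : Set H :=
  {f | f ∈ K ∧ ∀ U : Set H, IsOpen U → f ∈ U → ε < normDiam (K ∩ U)}

/-- Transfinite iterates of a derivation on sets: `D^{(0)}(K) = K`,
`D^{(ξ+1)}(K) = D(D^{(ξ)}(K))`, and intersections at limit stages. -/
noncomputable def derivIter {α : Type*} (D : Set α → Set α) (K : Set α) (o : Ordinal) :
    Set α :=
  Ordinal.limitRecOn o K (fun _ ih => D ih) (fun o _ ih => ⋂ (ζ : Ordinal) (h : ζ < o), ih ζ h)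

/-!
Cover `K` by the countably many closed sup-norm balls of radius `ε / 2` around a norm-dense
sequence. These balls are closed in the product topology, so by the Baire category theorem one
of them has nonempty interior in any nonempty compact `S ⊆ K`: some open `U` meets `S` in a set
of norm diameter at most `ε`, and `U` misses `𝔻_ε(S)`. Hence every nonempty iterate shrinks
strictly. Assigning to each countable `ξ` a basic open set meeting `𝔻_ε^{(ξ)}(K)` but missing
`𝔻_ε^{(ξ+1)}(K)` is injective, and a second-countable space has only countably many basic open
sets, so the iterates cannot stay nonempty up to `ω₁`.
-/

open Set Cardinal Ordinal TopologicalSpace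

lemma abs_sub_apply_le_two (f g : H) (n : ℕ) : |(f n : ℝ) - g n| ≤ 2 := by
  obtain ⟨hf₁, hf₂⟩ := (f n).2
  obtain ⟨hg₁, hg₂⟩ := (g n).2
  rw [abs_le]
  constructor <;> linarith

lemma bddAbove_range_abs_sub_apply (f g : H) : BddAbove (range fun n => |(f n : ℝ) - g n|) :=
  ⟨2, by rintro _ ⟨n, rfl⟩; exact abs_sub_apply_le_two f g n⟩

lemma abs_sub_apply_le_normDist (f g : H) (n : ℕ) : |(f n : ℝ) - g n| ≤ normDist f g :=
  le_ciSup (bddAbove_range_abs_sub_apply f g) n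

lemma normDist_nonneg (f g : H) : 0 ≤ normDist f g :=
  Real.iSup_nonneg fun _ => abs_nonneg _

lemma normDist_le_of_forall {f g : H} {r : ℝ} (hr : 0 ≤ r)
    (h : ∀ n, |(f n : ℝ) - g n| ≤ r) : normDist f g ≤ r :=
  Real.iSup_le h hr

lemma normDist_comm (f g : H) : normDist f g = normDist g f := by
  simp only [normDist, abs_sub_comm]

lemma normDist_triangle (f g h : H) : normDist f h ≤ normDist f g + normDist g h :=
  normDist_le_of_forall (add_nonneg (normDist_nonneg f g) (normDist_nonneg g h)) fun n =>
    (abs_sub_le _ _ _).trans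
      (add_le_add (abs_sub_apply_le_normDist f g n) (abs_sub_apply_le_normDist g h n))

lemma lowerSemicontinuous_normDist (g : H) : LowerSemicontinuous fun f => normDist f g :=
  lowerSemicontinuous_ciSup (fun f => bddAbove_range_abs_sub_apply f g) fun n =>
    ((continuous_apply n).subtype_val.sub continuous_const).abs.lowerSemicontinuous

lemma isClosed_setOf_normDist_le (g : H) (r : ℝ) : IsClosed {f | normDist f g ≤ r} :=
  (lowerSemicontinuous_normDist g).isClosed_preimage r

lemma normDiam_le_of_forall {S : Set H} {r : ℝ} (hr : 0 ≤ r)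
    (h : ∀ f ∈ S, ∀ g ∈ S, normDist f g ≤ r) : normDiam S ≤ r := by
  refine Real.sSup_le ?_ hr
  rintro _ ⟨f, hf, g, hg, rfl⟩
  exact h f hf g hg

theorem exists_isOpen_inter_nonempty_normDiam_le {S D : Set H} (hS : IsCompact S)
    (hne : S.Nonempty) (hD : D.Countable) {r : ℝ} (hr : 0 ≤ r)
    (hcover : ∀ f ∈ S, ∃ g ∈ D, normDist f g ≤ r) :
    ∃ U, IsOpen U ∧ (S ∩ U).Nonempty ∧ normDiam (S ∩ U) ≤ 2 * r := by
  have := isCompact_iff_compactSpace.mp hS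
  have := hne.to_subtype
  have := hD.to_subtype
  obtain ⟨g, x, hx⟩ := nonempty_interior_of_iUnion_of_closed
    (f := fun g : D => ((↑) : S → H) ⁻¹' {f | normDist f g ≤ r})
    (fun g => (isClosed_setOf_normDist_le g r).preimage continuous_subtype_val)
    (iUnion_eq_univ_iff.2 fun f => by
      obtain ⟨g, hg, hfg⟩ := hcover f f.2
      exact ⟨⟨g, hg⟩, hfg⟩)
  obtain ⟨t, hts, hto, hxt⟩ := mem_interior.mp hx
  obtain ⟨U, hU, rfl⟩ := isOpen_induced_iff.mp hto
  have hball : ∀ f ∈ S ∩ U, normDist f g ≤ r := fun f hf =>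
    hts (show (⟨f, hf.1⟩ : S) ∈ _ from hf.2)
  refine ⟨U, hU, ⟨x, x.2, hxt⟩, normDiam_le_of_forall (by positivity) fun a ha b hb => ?_⟩
  calc normDist a b ≤ normDist a g + normDist g b := normDist_triangle a g b
    _ ≤ r + r := add_le_add (hball a ha) (normDist_comm g b ▸ hball b hb)
    _ = 2 * r := by ring

lemma Dstar_subset (ε : ℝ) (S : Set H) : Dstar ε S ⊆ S := fun _ hf => hf.1

lemma disjoint_Dstar_of_normDiam_le {ε : ℝ} {S U : Set H} (hU : IsOpen U)
    (hdiam : normDiam (S ∩ U) ≤ ε) : Disjoint (Dstar ε S) U :=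
  disjoint_left.2 fun _ hf hfU => (hf.2 U hU hfU).not_ge hdiam

lemma isClosed_Dstar (ε : ℝ) {S : Set H} (hS : IsClosed S) : IsClosed (Dstar ε S) := by
  refine isOpen_compl_iff.1 (isOpen_iff_forall_mem_open.2 fun f hf => ?_)
  by_cases hfS : f ∈ S
  · obtain ⟨U, hU, hfU, hdiam⟩ : ∃ U, IsOpen U ∧ f ∈ U ∧ normDiam (S ∩ U) ≤ ε := by
      simpa [Dstar, hfS] using hf
    exact ⟨U, (disjoint_Dstar_of_normDiam_le hU hdiam).subset_compl_left, hU, hfU⟩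
  · exact ⟨Sᶜ, fun _ hg hgD => hg hgD.1, hS.isOpen_compl, hfS⟩

theorem Dstar_ssubset {ε : ℝ} (hε : 0 < ε) {S D : Set H} (hS : IsCompact S) (hne : S.Nonempty)
    (hD : D.Countable) (hcover : ∀ f ∈ S, ∃ g ∈ D, normDist f g ≤ ε / 2) :
    Dstar ε S ⊂ S := by
  obtain ⟨U, hU, ⟨f, hfS, hfU⟩, hdiam⟩ :=
    exists_isOpen_inter_nonempty_normDiam_le hS hne hD (by positivity) hcover
  rw [mul_div_cancel₀ ε two_ne_zero] at hdiam
  exact (ssubset_iff_of_subset (Dstar_subset ε S)).2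
    ⟨f, hfS, fun hf => disjoint_left.1 (disjoint_Dstar_of_normDiam_le hU hdiam) hf hfU⟩

section derivIter

variable {α : Type*} (D : Set α → Set α) (K : Set α)

lemma derivIter_zero : derivIter D K 0 = K :=
  Ordinal.limitRecOn_zero _ _ _

lemma derivIter_add_one (o : Ordinal) : derivIter D K (o + 1) = D (derivIter D K o) := by
  rw [derivIter, Ordinal.limitRecOn_add_one]
  rfl

lemma derivIter_of_isSuccLimit {o : Ordinal} (ho : Order.IsSuccLimit o) :
    derivIter D K o = ⋂ ζ < o, derivIter D K ζ := by
  rw [derivIter, Ordinal.limitRecOn_limit _ _ _ _ ho]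
  rfl

variable {D}

lemma antitone_derivIter (hD : ∀ S, D S ⊆ S) : Antitone (derivIter D K) := by
  intro ζ ξ hζξ
  induction ξ using Ordinal.limitRecOn generalizing ζ with
  | zero => rw [nonpos_iff_eq_zero.mp hζξ]
  | add_one o ih =>
    rcases hζξ.eq_or_lt with rfl | hlt
    · rfl
    · rw [derivIter_add_one]
      exact (hD _).trans (ih (Order.lt_add_one_iff.mp hlt))
  | limit o ho ih =>
    rcases hζξ.eq_or_lt with rfl | hlt
    · rfl
    · rw [derivIter_of_isSuccLimit D K ho]
      exact biInter_subset_of_mem hlt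

lemma derivIter_subset (hD : ∀ S, D S ⊆ S) (o : Ordinal) : derivIter D K o ⊆ K := by
  simpa only [derivIter_zero] using antitone_derivIter K hD (zero_le : 0 ≤ o)

lemma isClosed_derivIter [TopologicalSpace α] (hD : ∀ S, IsClosed S → IsClosed (D S))
    (hK : IsClosed K) (o : Ordinal) : IsClosed (derivIter D K o) := by
  induction o using Ordinal.limitRecOn with
  | zero => rwa [derivIter_zero]
  | add_one o ih => exact derivIter_add_one D K o ▸ hD _ ih
  | limit o ho ih =>
    rw [derivIter_of_isSuccLimit D K ho]
    exact isClosed_biInter ih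

end derivIter

lemma Ordinal.card_le_aleph0_iff_lt_omega_one {ξ : Ordinal} : ξ.card ≤ ℵ₀ ↔ ξ < ω₁ :=
  (lt_omega_iff_card_lt.trans lt_aleph_one_iff).symm

lemma Ordinal.not_countable_Iio_omega_one : ¬ (Iio ω₁ : Set Ordinal).Countable := by
  rw [← le_aleph0_iff_set_countable, Cardinal.mk_Iio_ordinal, card_omega, lift_le_aleph0, not_le]
  exact aleph0_lt_aleph_one

theorem exists_card_le_aleph0_eq_empty {X : Type*} [TopologicalSpace X]
    [SecondCountableTopology X] {A : Ordinal → Set X} (hA : Antitone A)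
    (hclosed : ∀ ξ, IsClosed (A ξ))
    (hssub : ∀ ξ : Ordinal, ξ.card ≤ ℵ₀ → (A ξ).Nonempty → A (ξ + 1) ⊂ A ξ) :
    ∃ ξ : Ordinal, ξ.card ≤ ℵ₀ ∧ A ξ = ∅ := by
  by_contra! hne
  obtain ⟨B, hBc, -, hB⟩ := exists_countable_basis X
  have hpick : ∀ ξ : Iio ω₁, ∃ b ∈ B, (A ξ ∩ b).Nonempty ∧ Disjoint (A (ξ + 1)) b := by
    rintro ⟨ξ, hξ⟩
    have hcard := card_le_aleph0_iff_lt_omega_one.2 hξ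
    obtain ⟨x, hxξ, hxsucc⟩ := exists_of_ssubset (hssub ξ hcard (hne ξ hcard))
    obtain ⟨b, hbB, hxb, hb⟩ :=
      hB.exists_subset_of_mem_open (mem_compl hxsucc) (hclosed _).isOpen_compl
    exact ⟨b, hbB, ⟨x, hxξ, hxb⟩, disjoint_compl_right.mono_right hb⟩
  choose b hbB hmeet hdisj using hpick
  have hinj : Function.Injective fun ξ => (⟨b ξ, hbB ξ⟩ : B) := by
    refine Function.Injective.of_lt_imp_ne fun ζ ξ hlt heq => ?_
    obtain ⟨x, hxξ, hxb⟩ := hmeet ξ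
    have hxζ : x ∈ A (ζ + 1) := hA (Order.add_one_le_of_lt hlt) hxξ
    rw [← Subtype.mk.inj heq] at hxb
    exact disjoint_left.1 (hdisj ζ) hxζ hxb
  have := hBc.to_subtype
  exact not_countable_Iio_omega_one (countable_coe_iff.1 hinj.countable)

theorem derivIter_Dstar_add_one_ssubset {K : Set H} (hc : IsCompact K) (hsep : NormSeparable K)
    {ε : ℝ} (hε : 0 < ε) {ξ : Ordinal} (hne : (derivIter (Dstar ε) K ξ).Nonempty) :
    derivIter (Dstar ε) K (ξ + 1) ⊂ derivIter (Dstar ε) K ξ := by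
  obtain ⟨D, hD, -, hdense⟩ := hsep
  have hsub := derivIter_subset K (Dstar_subset ε) ξ
  have hclosed := isClosed_derivIter K (fun _ => isClosed_Dstar ε) hc.isClosed ξ
  rw [derivIter_add_one]
  exact Dstar_ssubset hε (hc.of_isClosed_subset hclosed hsub) hne hD fun f hf =>
    (hdense f (hsub hf) (ε / 2) (by positivity)).imp fun _ hg => ⟨hg.1, hg.2.le⟩

theorem derivIter_strictly_decreasing_and_vanishes_general (K : Set H)
    (hc : IsCompact K) (hsep : NormSeparable K) (ε : ℝ) (hε : 0 < ε) :
    (∀ ξ : Ordinal, ξ.card ≤ Cardinal.aleph0 →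
      (derivIter (Dstar ε) K ξ).Nonempty →
        derivIter (Dstar ε) K (ξ + 1) ⊂ derivIter (Dstar ε) K ξ) ∧
    (∃ ξ : Ordinal, ξ.card ≤ Cardinal.aleph0 ∧ derivIter (Dstar ε) K ξ = ∅) :=
  ⟨fun _ _ => derivIter_Dstar_add_one_ssubset hc hsep hε,
    exists_card_le_aleph0_eq_empty (antitone_derivIter K (Dstar_subset ε))
      (isClosed_derivIter K (fun _ => isClosed_Dstar ε) hc.isClosed)
      fun _ _ => derivIter_Dstar_add_one_ssubset hc hsep hε⟩

/-- For `K ⊆ H` nonempty compact and norm separable and `ε > 0`: (1) as long as the iterated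
derivative `𝔻_ε^{(ξ)}(K)` is nonempty, the next iterate is a proper subset; (2) some countable
iterate is empty. -/
theorem derivIter_strictly_decreasing_and_vanishes (K : Set H) (hK : K.Nonempty)
    (hc : IsCompact K) (hsep : NormSeparable K) (ε : ℝ) (hε : 0 < ε) :
    (∀ ξ : Ordinal, ξ.card ≤ Cardinal.aleph0 →
      (derivIter (Dstar ε) K ξ).Nonempty →
        derivIter (Dstar ε) K (ξ + 1) ⊂ derivIter (Dstar ε) K ξ) ∧
    (∃ ξ : Ordinal, ξ.card ≤ Cardinal.aleph0 ∧ derivIter (Dstar ε) K ξ = ∅) :=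
  derivIter_strictly_decreasing_and_vanishes_general K hc hsep ε hε
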